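/- arXiv:2412.04173 — 4 statements merged into one kernel-verified Lean document; each statement's English description precedes it below -/
import Mathlib

section
/- Mutation of a degree configuration produces a degree configuration: if σ ∈ H^I satisfies σ^{B⁺} = σ^{B⁻} (i.e. Σ_i b⁺_{ik} σ_i = Σ_i b⁻_{ik} σ_i for all k ∈ I_uf), then the mutated configuration σ' with σ'_i = σ_i for i ≠ k and σ'_k = σ^{B⁺_{•k}} − σ_k satisfies the analogous condition with respect to the mutated matrix μ_k(B). -/
set_option linter.unnecessarySimpa false


/-- The positive part `b⁺ = max(b,0)` of an integer. -/
def ipos (a : ℤ) : ℤ := max a 0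

/-- The negative part `b⁻ = max(-b,0)` of an integer. -/
def ineg (a : ℤ) : ℤ := max (-a) 0

variable {I : Type*} [Fintype I] [DecidableEq I] {H : Type*} [AddCommGroup H]

/-- Mutation of an extended exchange matrix `B ∈ ℤ^(I × I_uf)` at a mutable vertex `k`. -/
def mutateMatrix {Iuf : Set I} (B : Matrix I Iuf ℤ) (k : Iuf) : Matrix I Iuf ℤ :=
  fun i j =>
    if i = (k : I) ∨ j = k then -B i j
    else B i j + ipos (B i k) * ipos (B (k : I) j) - ineg (B i k) * ineg (B (k : I) j)

/-- `σ ∈ H^I` is an `H`-degree configuration for `B`: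
`Σ_i b⁺_{ik} σ_i = Σ_i b⁻_{ik} σ_i` for every mutable `k`. -/
def IsDegreeConfig {Iuf : Set I} (B : Matrix I Iuf ℤ) (σ : I → H) : Prop :=
  ∀ k : Iuf, (∑ i, ipos (B i k) • σ i) = ∑ i, ineg (B i k) • σ i

/-- The mutation at `k` of a degree configuration `σ`. -/
def mutateDeg {Iuf : Set I} (B : Matrix I Iuf ℤ) (k : Iuf) (σ : I → H) : I → H :=
  fun i => if i = (k : I) then (∑ j, ipos (B j k) • σ j) - σ (k : I) else σ i

lemma ipos_sub_ineg (a : ℤ) : ipos a - ineg a = a := by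
  unfold ipos ineg; omega

/-- Mutation of a degree configuration produces a degree configuration for the
mutated extended exchange matrix. -/
theorem mutateDeg_isDegreeConfig {Iuf : Set I} (B : Matrix I Iuf ℤ)
    (hB : ∃ d : Iuf → ℤ, (∀ i, 0 < d i) ∧
      ∀ i j : Iuf, d i * B (i : I) j = -(d j * B (j : I) i))
    (k : Iuf) (σ : I → H) (hσ : IsDegreeConfig B σ) :
    IsDegreeConfig (mutateMatrix B k) (mutateDeg B k σ) := by
  obtain ⟨d, hd, hskew⟩ := hB
  have hkk : B (k : I) k = 0 := by
    have h := hskew k k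
    have h2 : d k * B (k : I) k = 0 := by linarith
    rcases mul_eq_zero.mp h2 with h3 | h3
    · exact absurd h3 (hd k).ne'
    · exact h3
  have hσ0 : ∀ l : Iuf, ∑ i, B i l • σ i = 0 := by
    intro l
    have h := hσ l
    calc ∑ i, B i l • σ i
        = ∑ i, (ipos (B i l) • σ i - ineg (B i l) • σ i) :=
          Finset.sum_congr rfl fun i _ => by rw [← sub_smul, ipos_sub_ineg]
      _ = (∑ i, ipos (B i l) • σ i) - ∑ i, ineg (B i l) • σ i := Finset.sum_sub_distrib _ _
      _ = 0 := by rw [h, sub_self]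
  -- reformulate the goal as a vanishing sum
  have key : ∀ l : Iuf, ∑ i, mutateMatrix B k i l • mutateDeg B k σ i = 0 := by
    intro l
    by_cases hl : l = k
    · rw [hl]
      have hterm : ∀ i, mutateMatrix B k i k • mutateDeg B k σ i = -(B i k • σ i) := by
        intro i
        by_cases hi : i = (k : I)
        · subst hi
          simp [mutateMatrix, mutateDeg, hkk]
        · simp [mutateMatrix, mutateDeg, hi, neg_smul]
      rw [Finset.sum_congr rfl fun i _ => hterm i, Finset.sum_neg_distrib, hσ0 k, neg_zero]
    · have hsplit : (∑ i, mutateMatrix B k i l • mutateDeg B k σ i)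
          = mutateMatrix B k (k : I) l • mutateDeg B k σ (k : I)
            + ∑ i ∈ Finset.univ.erase (k : I), mutateMatrix B k i l • mutateDeg B k σ i :=
        (Finset.add_sum_erase _ _ (Finset.mem_univ _)).symm
      have hgen : ∀ i ∈ Finset.univ.erase (k : I),
          mutateMatrix B k i l • mutateDeg B k σ i
            = B i l • σ i + ipos (B (k : I) l) • (ipos (B i k) • σ i)
              - ineg (B (k : I) l) • (ineg (B i k) • σ i) := by
        intro i hi
        have hik : i ≠ (k : I) := Finset.ne_of_mem_erase hi
        have hM : mutateMatrix B k i l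
            = B i l + ipos (B i k) * ipos (B (k : I) l)
              - ineg (B i k) * ineg (B (k : I) l) := by
          simp [mutateMatrix, hik, hl]
        rw [hM, mutateDeg, if_neg hik, sub_smul, add_smul,
          mul_comm (ipos (B i k)), mul_smul, mul_comm (ineg (B i k)), mul_smul]
      have h1 : ∑ i ∈ Finset.univ.erase (k : I), B i l • σ i = -(B (k : I) l • σ (k : I)) := by
        have h := Finset.add_sum_erase Finset.univ (fun i => B i l • σ i) (Finset.mem_univ (k : I))
        rw [hσ0 l] at h
        exact eq_neg_of_add_eq_zero_right h
      have h2 : ∑ i ∈ Finset.univ.erase (k : I), ipos (B i k) • σ i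
          = ∑ j, ipos (B j k) • σ j := by
        have h := Finset.add_sum_erase Finset.univ (fun i => ipos (B i k) • σ i)
          (Finset.mem_univ (k : I))
        simpa [hkk, ipos] using h
      have h3 : ∑ i ∈ Finset.univ.erase (k : I), ineg (B i k) • σ i
          = ∑ j, ipos (B j k) • σ j := by
        have h := Finset.add_sum_erase Finset.univ (fun i => ineg (B i k) • σ i)
          (Finset.mem_univ (k : I))
        rw [hσ k]
        simpa [hkk, ineg] using h
      have hk1 : mutateMatrix B k (k : I) l = -(B (k : I) l) := by simp [mutateMatrix]
      have hk2 : mutateDeg B k σ (k : I) = (∑ j, ipos (B j k) • σ j) - σ (k : I) := by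
        simp [mutateDeg]
      rw [hsplit, Finset.sum_congr rfl hgen, hk1, hk2]
      rw [Finset.sum_sub_distrib, Finset.sum_add_distrib, ← Finset.smul_sum, ← Finset.smul_sum,
        h1, h2, h3]
      have hrel : ineg (B (k : I) l) = ipos (B (k : I) l) - B (k : I) l := by
        have := ipos_sub_ineg (B (k : I) l); omega
      rw [hrel]
      module
  intro l
  have h := key l
  calc ∑ i, ipos (mutateMatrix B k i l) • mutateDeg B k σ i
      = (∑ i, ineg (mutateMatrix B k i l) • mutateDeg B k σ i)
        + ∑ i, mutateMatrix B k i l • mutateDeg B k σ i := by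
        rw [← Finset.sum_add_distrib]
        refine Finset.sum_congr rfl fun i _ => ?_
        rw [← add_smul]
        congr 1
        have := ipos_sub_ineg (mutateMatrix B k i l); omega
    _ = ∑ i, ineg (mutateMatrix B k i l) • mutateDeg B k σ i := by rw [h, add_zero]
end

section
/- The mutated cluster variable is determined by the exchange relation: in a seed of maximal rank over a field K with algebraically independent cluster (x_i)_{i∈I}, the element x'_k := (x^{B⁺_{•k}} + x^{B⁻_{•k}}) / x_k, together with (x_i)_{i≠k}, is again a transcendence basis of K over the base field. -/
section helpers
open Polynomial in
lemma core_update_algIndep {ι : Type*} [DecidableEq ι] {K : Type*} [Field K]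
    [Algebra ℂ K] {z : ι → K} (hz : AlgebraicIndependent ℂ z) (k : ι) {m : K}
    (hm : m ∈ Algebra.adjoin ℂ (Set.range fun i : {i : ι // i ≠ k} => z i))
    (hm0 : m ≠ 0) (hzk : z k ≠ 0) :
    AlgebraicIndependent ℂ (Function.update z k (m / z k)) := by
  set z' : {i : ι // i ≠ k} → K := fun i => z i with hz'def
  have hz' : AlgebraicIndependent ℂ z' := hz.comp _ Subtype.val_injective
  have helim : AlgebraicIndependent ℂ (fun o : Option {i : ι // i ≠ k} => o.elim (z k) z') := by
    have := hz.comp (Equiv.optionSubtypeNe k) (Equiv.injective _)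
    convert this using 1
    funext o
    cases o <;> rfl
  have htrans : Transcendental (Algebra.adjoin ℂ (Set.range z')) (z k) :=
    (hz'.option_iff_transcendental (z k)).1 helim
  set A₀ := Algebra.adjoin ℂ (Set.range z')
  have htrans' : Transcendental A₀ (m / z k) := by
    rintro ⟨p, hp, hpe⟩
    apply htrans
    have hinv : Invertible (m / z k) := invertibleOfNonzero (div_ne_zero hm0 hzk)
    have h1 : eval₂ (algebraMap A₀ K) (⅟(m / z k)) (reverse p) = 0 := by
      rw [eval₂_reverse_eq_zero_iff]
      rw [Polynomial.aeval_def] at hpe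
      exact hpe
    have hIv : ⅟(m / z k) = z k / m := by
      rw [invOf_eq_inv _, inv_div]
    rw [hIv] at h1
    have h2 := Polynomial.scaleRoots_eval₂_eq_zero (s := (⟨m, hm⟩ : A₀))
      (algebraMap A₀ K) h1
    have hms : algebraMap A₀ K (⟨m, hm⟩ : A₀) * (z k / m) = z k := by
      have : algebraMap A₀ K (⟨m, hm⟩ : A₀) = m := rfl
      rw [this]
      field_simp
    rw [hms] at h2
    refine ⟨(reverse p).scaleRoots ⟨m, hm⟩, ?_, ?_⟩
    · exact Polynomial.scaleRoots_ne_zero (fun h => hp (reverse_eq_zero.mp h)) _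
    · rw [Polynomial.aeval_def]; exact h2
  have hopt : AlgebraicIndependent ℂ (fun o : Option {i : ι // i ≠ k} => o.elim (m / z k) z') :=
    (hz'.option_iff_transcendental (m / z k)).2 htrans'
  have := hopt.comp (Equiv.optionSubtypeNe k).symm (Equiv.injective _)
  convert this using 1
  funext i
  by_cases h : i = k
  · subst h
    simp [Function.comp, Equiv.optionSubtypeNe_symm_self]
  · simp [Function.comp, Function.update_of_ne h, Equiv.optionSubtypeNe_symm_of_ne h, hz'def]

open MvPolynomial in
lemma prodpow_add_ne_zero {I : Type*} [Fintype I] [DecidableEq I] {K : Type*}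
    [Field K] [Algebra ℂ K] {x : I → K} (hx : AlgebraicIndependent ℂ x)
    {n m : I → ℕ} (h : n ≠ m) :
    (∏ i, x i ^ n i) + ∏ i, x i ^ m i ≠ 0 := by
  have key : ∀ f : I → ℕ,
      ∏ i, x i ^ f i = aeval x (monomial (Finsupp.equivFunOnFinite.symm f) (1 : ℂ)) := by
    intro f
    rw [aeval_monomial, map_one, one_mul]
    refine (Finset.prod_subset (Finset.subset_univ _) ?_).symm
    intro i _ hi
    have : (Finsupp.equivFunOnFinite.symm f) i = 0 := by
      simpa using Finsupp.notMem_support_iff.mp hi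
    simp_all
  intro hzero
  rw [key n, key m, ← map_add] at hzero
  have h0 : (monomial (Finsupp.equivFunOnFinite.symm n) (1 : ℂ)
      + monomial (Finsupp.equivFunOnFinite.symm m) (1 : ℂ)) = 0 := by
    apply hx
    rw [map_zero]; exact hzero
  have hne : Finsupp.equivFunOnFinite.symm n ≠ Finsupp.equivFunOnFinite.symm m := by
    simpa using h
  have := congrArg (coeff (Finsupp.equivFunOnFinite.symm n)) h0
  rw [coeff_add, coeff_monomial, coeff_monomial, if_pos rfl, if_neg hne.symm] at this
  simp at this
end helpers

/-- In a seed of maximal rank over a field extension `K` of `ℂ`, the element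
`x'_k = (x^{B⁺_{•k}} + x^{B⁻_{•k}}) / x_k` together with the `x_i` for `i ≠ k`
is again a transcendence basis of `K` over `ℂ`. -/
theorem mutated_cluster_isTranscendenceBasis
    {I : Type*} [Fintype I] [DecidableEq I] {Iuf : Set I}
    {K : Type*} [Field K] [Algebra ℂ K]
    (B : Matrix I Iuf ℤ)
    (hskew : ∃ d : Iuf → ℤ, (∀ i, 0 < d i) ∧
      ∀ i j : Iuf, d i * B (i : I) j = -(d j * B (j : I) i))
    (hrank : LinearIndependent ℤ fun j : Iuf => fun i : I => B i j)
    (x : I → K) (hx0 : ∀ i, x i ≠ 0)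
    (hx : IsTranscendenceBasis ℂ x) (k : Iuf) :
    IsTranscendenceBasis ℂ
      (Function.update x (k : I)
        (((∏ i, x i ^ (ipos (B i k)).toNat) + ∏ i, x i ^ (ineg (B i k)).toNat) /
          x (k : I))) := by
  classical
  obtain ⟨d, hd, hd2⟩ := hskew
  -- basic notation
  set np : I → ℕ := fun i => (ipos (B i k)).toNat with hnp
  set nm : I → ℕ := fun i => (ineg (B i k)).toNat with hnm
  set M : K := (∏ i, x i ^ np i) + ∏ i, x i ^ nm i with hM
  -- B k k = 0
  have hBkk : B (k : I) k = 0 := by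
    have h1 := hd2 k k
    have h2 : d k * B (k : I) k = 0 := by linarith
    rcases mul_eq_zero.mp h2 with h | h
    · exact absurd h (hd k).ne'
    · exact h
  have hnpk : np (k : I) = 0 := by simp [hnp, hBkk, ipos]
  have hnmk : nm (k : I) = 0 := by simp [hnm, hBkk, ineg]
  -- the exchange column is nonzero
  have hcol : ∃ i₀ : I, B i₀ k ≠ 0 := by
    have := hrank.ne_zero k
    rw [Function.ne_iff] at this
    exact this
  have hne : np ≠ nm := by
    obtain ⟨i₀, hi₀⟩ := hcol
    intro h
    apply hi₀
    have := congrFun h i₀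
    simp only [hnp, hnm, ipos, ineg] at this
    omega
  have hM0 : M ≠ 0 := prodpow_add_ne_zero hx.1 hne
  -- membership of M in any subalgebra containing the x_i, i ≠ k
  have hMmem : ∀ A : Subalgebra ℂ K, (∀ i : I, i ≠ (k : I) → x i ∈ A) → M ∈ A := by
    intro A hA
    have hprod : ∀ f : I → ℕ, f (k : I) = 0 → (∏ i, x i ^ f i) ∈ A := by
      intro f hf
      refine Subalgebra.prod_mem A fun i _ => ?_
      by_cases h : i = (k : I)
      · subst h; rw [hf, pow_zero]; exact Subalgebra.one_mem A
      · exact Subalgebra.pow_mem A (hA i h) _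
    exact Subalgebra.add_mem A (hprod np hnpk) (hprod nm hnmk)
  set yk : K := M / x (k : I) with hyk
  set y : I → K := Function.update x (k : I) yk with hy
  have hyk0 : yk ≠ 0 := div_ne_zero hM0 (hx0 k)
  have hyi : ∀ i : I, i ≠ (k : I) → y i = x i := fun i h => Function.update_of_ne h _ _
  have hykk : y (k : I) = yk := Function.update_self _ _ _
  -- Step 1: y is algebraically independent
  have hyind : AlgebraicIndependent ℂ y := by
    apply core_update_algIndep hx.1 (k : I) _ hM0 (hx0 k)
    apply hMmem
    intro i hi
    exact Algebra.subset_adjoin ⟨⟨i, hi⟩, rfl⟩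
  constructor
  · exact hyind
  -- Step 2: maximality
  intro s hs hsub
  refine hsub.antisymm ?_
  intro a ha
  by_contra hay
  have hyinj : Function.Injective y := hyind.injective
  -- the extended family
  set w : Option I → K := fun o => o.elim a y with hw
  have hwmem : ∀ o : Option I, w o ∈ s := by
    rintro (_ | i)
    · exact ha
    · exact hsub ⟨i, rfl⟩
  have hwinj : Function.Injective w := by
    rintro (_ | i) (_ | j) h
    · rfl
    · exact absurd ⟨j, h.symm⟩ hay
    · exact absurd ⟨i, h⟩ hay
    · exact congrArg some (hyinj h)
  have hwind : AlgebraicIndependent ℂ w := by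
    have := hs.comp (fun o : Option I => (⟨w o, hwmem o⟩ : s))
      (fun o o' h => hwinj (congrArg Subtype.val h))
    exact this
  -- a is not one of the x_i, i ≠ k (else it would be in range y)
  have haxne : ∀ i : I, i ≠ (k : I) → a ≠ x i := by
    intro i hi h
    exact hay ⟨i, by rw [hyi i hi, h]⟩
  -- a ≠ x k : else a is algebraic over adjoin (range y), contradicting option_iff
  have haxk : a ≠ x (k : I) := by
    intro h
    have htr : Transcendental (Algebra.adjoin ℂ (Set.range y)) a := by
      refine (hyind.option_iff_transcendental a).1 ?_
      exact hwind
    apply htr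
    have hykmem : yk ∈ Algebra.adjoin ℂ (Set.range y) := by
      rw [← hykk]; exact Algebra.subset_adjoin ⟨(k : I), rfl⟩
    have hMmem' : M ∈ Algebra.adjoin ℂ (Set.range y) := by
      apply hMmem
      intro i hi
      rw [← hyi i hi]
      exact Algebra.subset_adjoin ⟨i, rfl⟩
    refine ⟨Polynomial.C (⟨yk, hykmem⟩ : Algebra.adjoin ℂ (Set.range y)) * Polynomial.X
      - Polynomial.C ⟨M, hMmem'⟩, ?_, ?_⟩
    · intro hzero
      have := congrArg (Polynomial.coeff · 1) hzero
      simp only [Polynomial.coeff_sub, Polynomial.coeff_C_mul, Polynomial.coeff_X_one,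
        mul_one, Polynomial.coeff_C, Polynomial.coeff_zero] at this
      apply hyk0
      have : (⟨yk, hykmem⟩ : Algebra.adjoin ℂ (Set.range y)) = 0 := by
        simpa using this
      exact congrArg Subtype.val this
    · have hca : algebraMap (Algebra.adjoin ℂ (Set.range y)) K
          (⟨yk, hykmem⟩ : Algebra.adjoin ℂ (Set.range y)) = yk := rfl
      have hcM : algebraMap (Algebra.adjoin ℂ (Set.range y)) K
          (⟨M, hMmem'⟩ : Algebra.adjoin ℂ (Set.range y)) = M := rfl
      simp only [map_sub, map_mul, Polynomial.aeval_C, Polynomial.aeval_X, hca, hcM, h]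
      rw [hyk, div_mul_cancel₀ _ (hx0 k), sub_self]
  have haxrange : a ∉ Set.range x := by
    rintro ⟨i, rfl⟩
    by_cases h : i = (k : I)
    · exact haxk (congrArg x h)
    · exact haxne i h rfl
  -- mutate w back at index (some k) to recover the family (a, x)
  have hwk : w (some (k : I)) = yk := hykk
  have hwback : AlgebraicIndependent ℂ (Function.update w (some (k : I)) (M / w (some (k : I)))) := by
    apply core_update_algIndep hwind (some (k : I)) _ hM0 (by rw [hwk]; exact hyk0)
    apply hMmem
    intro i hi
    have : w (some i) = x i := by
      show y i = x i
      exact hyi i hi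
    rw [← this]
    exact Algebra.subset_adjoin ⟨⟨some i, by simpa using hi⟩, rfl⟩
  have hMyk : M / w (some (k : I)) = x (k : I) := by
    rw [hwk, hyk, div_div_eq_mul_div]
    field_simp
  have hupdate : Function.update w (some (k : I)) (M / w (some (k : I)))
      = fun o : Option I => o.elim a x := by
    funext o
    match o with
    | none =>
      rw [Function.update_of_ne (by simp)]
      rfl
    | some i =>
      by_cases h : i = (k : I)
      · subst h
        rw [Function.update_self, hMyk]
        rfl
      · rw [Function.update_of_ne (by simpa using h)]
        show y i = x i
        exact hyi i h
  rw [hupdate] at hwback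
  -- contradict maximality of x
  have hinj2 : Function.Injective (fun o : Option I => o.elim a x) := by
    rintro (_ | i) (_ | j) h
    · rfl
    · exact absurd ⟨j, h.symm⟩ haxrange
    · exact absurd ⟨i, h⟩ haxrange
    · exact congrArg some (hx.1.injective h)
  have hrange := hx.2 (Set.range fun o : Option I => o.elim a x)
    ((algebraicIndependent_subtype_range hinj2).2 hwback)
    (by rintro _ ⟨i, rfl⟩; exact ⟨some i, rfl⟩)
  exact haxrange (hrange ▸ ⟨none, rfl⟩)
end

section
/- In the ring S generated in degree one over ℂ by θ₀,…,θ₅ with relations θ₁θ₃ = θ₂θ₀ + θ₀², θ₂θ₄ = θ₃θ₀ + θ₀², θ₃θ₅ = θ₄θ₀ + θ₀², θ₄θ₁ = θ₅θ₀ + θ₀², θ₅θ₂ = θ₁θ₀ + θ₀², the degree-0 localization at θ₀, i.e. the ring generated by x_i = θ_i/θ₀ (1 ≤ i ≤ 5), is presented by the relations x₁x₃ = x₂+1, x₂x₄ = x₃+1, x₃x₅ = x₄+1, x₄x₁ = x₅+1, x₅x₂ = x₁+1. -/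
open MvPolynomial

noncomputable section

/-- The ideal of relations of the graded ring `S` generated in degree one by
`θ₀,…,θ₅`. -/
def fanoRelations : Ideal (MvPolynomial (Fin 6) ℂ) :=
  Ideal.span
    {X 1 * X 3 - X 2 * X 0 - X 0 ^ 2,
     X 2 * X 4 - X 3 * X 0 - X 0 ^ 2,
     X 3 * X 5 - X 4 * X 0 - X 0 ^ 2,
     X 4 * X 1 - X 5 * X 0 - X 0 ^ 2,
     X 5 * X 2 - X 1 * X 0 - X 0 ^ 2}

/-- The graded algebra `S = ℂ[θ₀,…,θ₅]/(relations)`. -/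
def FanoS : Type := MvPolynomial (Fin 6) ℂ ⧸ fanoRelations

instance : CommRing FanoS := Ideal.Quotient.commRing fanoRelations
instance : Algebra ℂ FanoS := Ideal.Quotient.algebra ℂ

/-- The generators `θᵢ ∈ S`. -/
def θ (i : Fin 6) : FanoS := Ideal.Quotient.mk fanoRelations (X i)

/-- The localization of `S` away from `θ₀`. -/
def FanoT : Type := Localization.Away (θ 0)

instance : CommRing FanoT := by unfold FanoT; infer_instance
instance : Algebra FanoS FanoT := by unfold FanoT; infer_instance
instance : IsLocalization.Away (θ 0) FanoT := by unfold FanoT; infer_instance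
instance : Algebra ℂ FanoT :=
  ((algebraMap FanoS FanoT).comp (algebraMap ℂ FanoS)).toAlgebra

/-- The dehomogenized generators `x_i = θ_i/θ₀` (`1 ≤ i ≤ 5`), as elements of the
degree-`0` part of `S[θ₀^{-1}]`. -/
def fanoX (i : Fin 5) : FanoT :=
  algebraMap FanoS FanoT (θ i.succ) * IsLocalization.Away.invSelf (S := FanoT) (θ 0)

/-- The ideal of the cluster relations `x₁x₃ = x₂+1`, `x₂x₄ = x₃+1`, `x₃x₅ = x₄+1`,
`x₄x₁ = x₅+1`, `x₅x₂ = x₁+1` (indices shifted: variable `i : Fin 5` is `x_{i+1}`). -/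
def clusterRelations : Ideal (MvPolynomial (Fin 5) ℂ) :=
  Ideal.span
    {X 0 * X 2 - X 1 - 1,
     X 1 * X 3 - X 2 - 1,
     X 2 * X 4 - X 3 - 1,
     X 3 * X 0 - X 4 - 1,
     X 4 * X 1 - X 0 - 1}

/-- The presented algebra `A = ℂ[x₁,…,x₅]/(cluster relations)`. -/
def ClusterA : Type := MvPolynomial (Fin 5) ℂ ⧸ clusterRelations

instance : CommRing ClusterA := Ideal.Quotient.commRing clusterRelations
instance : Algebra ℂ ClusterA := Ideal.Quotient.algebra ℂ

-- auxiliary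
namespace DehomAux

abbrev y (i : Fin 5) : ClusterA := Ideal.Quotient.mk clusterRelations (X i)

lemma yrel (p : MvPolynomial (Fin 5) ℂ)
    (hp : p ∈ ({X 0 * X 2 - X 1 - 1, X 1 * X 3 - X 2 - 1, X 2 * X 4 - X 3 - 1,
      X 3 * X 0 - X 4 - 1, X 4 * X 1 - X 0 - 1} : Set (MvPolynomial (Fin 5) ℂ))) :
    Ideal.Quotient.mk clusterRelations p = 0 :=
  Ideal.Quotient.eq_zero_iff_mem.mpr (Ideal.subset_span hp)

lemma θrel (p : MvPolynomial (Fin 6) ℂ)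
    (hp : p ∈ ({X 1 * X 3 - X 2 * X 0 - X 0 ^ 2, X 2 * X 4 - X 3 * X 0 - X 0 ^ 2,
      X 3 * X 5 - X 4 * X 0 - X 0 ^ 2, X 4 * X 1 - X 5 * X 0 - X 0 ^ 2,
      X 5 * X 2 - X 1 * X 0 - X 0 ^ 2} : Set (MvPolynomial (Fin 6) ℂ))) :
    Ideal.Quotient.mk fanoRelations p = 0 :=
  Ideal.Quotient.eq_zero_iff_mem.mpr (Ideal.subset_span hp)

lemma θmul (a b c : Fin 6)
    (h : Ideal.Quotient.mk fanoRelations (X a * X b - X c * X 0 - X 0 ^ 2) = 0) :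
    θ a * θ b = θ c * θ 0 + θ 0 ^ 2 := by
  have h2 : θ a * θ b - θ c * θ 0 - θ 0 ^ 2 = 0 := by
    simp only [map_sub, map_mul, map_pow] at h; exact h
  linear_combination h2

lemma key (a b c : Fin 6) (h : θ a * θ b = θ c * θ 0 + θ 0 ^ 2) :
    (algebraMap FanoS FanoT (θ a) * IsLocalization.Away.invSelf (S := FanoT) (θ 0)) *
      (algebraMap FanoS FanoT (θ b) * IsLocalization.Away.invSelf (S := FanoT) (θ 0)) =
    algebraMap FanoS FanoT (θ c) * IsLocalization.Away.invSelf (S := FanoT) (θ 0) + 1 := by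
  set A := algebraMap FanoS FanoT
  set v := IsLocalization.Away.invSelf (S := FanoT) (θ 0) with hv
  have h1 : A (θ 0) * v = 1 := IsLocalization.Away.mul_invSelf (θ 0)
  calc (A (θ a) * v) * (A (θ b) * v) = A (θ a * θ b) * (v * v) := by rw [map_mul]; ring
    _ = A (θ c * θ 0 + θ 0 ^ 2) * (v * v) := by rw [h]
    _ = (A (θ c) * v) * (A (θ 0) * v) + (A (θ 0) * v) ^ 2 := by
        rw [map_add, map_mul, map_pow]; ring
    _ = A (θ c) * v + 1 := by rw [h1]; ring

lemma xrel (i j k : Fin 5)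
    (h : θ i.succ * θ j.succ = θ k.succ * θ 0 + θ 0 ^ 2) :
    fanoX i * fanoX j = fanoX k + 1 := key _ _ _ h

lemma h13 : fanoX 0 * fanoX 2 = fanoX 1 + 1 :=
  xrel 0 2 1 (θmul 1 3 2 (θrel _ (by left; rfl)))
lemma h24 : fanoX 1 * fanoX 3 = fanoX 2 + 1 :=
  xrel 1 3 2 (θmul 2 4 3 (θrel _ (by right; left; rfl)))
lemma h35 : fanoX 2 * fanoX 4 = fanoX 3 + 1 :=
  xrel 2 4 3 (θmul 3 5 4 (θrel _ (by right; right; left; rfl)))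
lemma h41 : fanoX 3 * fanoX 0 = fanoX 4 + 1 :=
  xrel 3 0 4 (θmul 4 1 5 (θrel _ (by right; right; right; left; rfl)))
lemma h52 : fanoX 4 * fanoX 1 = fanoX 0 + 1 :=
  xrel 4 1 0 (θmul 5 2 1 (θrel _ (by right; right; right; right; rfl)))

lemma hker : ∀ p ∈ clusterRelations, aeval fanoX p = 0 := by
  intro p hp
  have : clusterRelations ≤ RingHom.ker (aeval fanoX : MvPolynomial (Fin 5) ℂ →ₐ[ℂ] FanoT) := by
    rw [clusterRelations, Ideal.span_le]
    rintro q (rfl | rfl | rfl | rfl | rfl) <;>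
      simp only [SetLike.mem_coe, RingHom.mem_ker, AlgHom.coe_toRingHom, map_sub, map_mul,
        map_one, aeval_X]
    · rw [h13]; ring
    · rw [h24]; ring
    · rw [h35]; ring
    · rw [h41]; ring
    · rw [h52]; ring
  exact this hp

def e : ClusterA →ₐ[ℂ] FanoT :=
  Ideal.Quotient.liftₐ clusterRelations (aeval fanoX) hker

lemma e_mk (p : MvPolynomial (Fin 5) ℂ) :
    e (Ideal.Quotient.mk clusterRelations p) = aeval fanoX p := rfl


open LaurentPolynomial in
def v : Fin 6 → LaurentPolynomial ClusterA :=
  ![T 1, LaurentPolynomial.C (y 0) * T 1, LaurentPolynomial.C (y 1) * T 1, LaurentPolynomial.C (y 2) * T 1, LaurentPolynomial.C (y 3) * T 1, LaurentPolynomial.C (y 4) * T 1]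

open LaurentPolynomial in
lemma v0 : v 0 = T 1 := rfl
open LaurentPolynomial in
lemma v1 : v 1 = LaurentPolynomial.C (y 0) * T 1 := rfl
open LaurentPolynomial in
lemma v2 : v 2 = LaurentPolynomial.C (y 1) * T 1 := rfl
open LaurentPolynomial in
lemma v3 : v 3 = LaurentPolynomial.C (y 2) * T 1 := rfl
open LaurentPolynomial in
lemma v4 : v 4 = LaurentPolynomial.C (y 3) * T 1 := rfl
open LaurentPolynomial in
lemma v5 : v 5 = LaurentPolynomial.C (y 4) * T 1 := rfl

lemma ymul (a b c : Fin 5)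
    (h : Ideal.Quotient.mk clusterRelations (X a * X b - X c - 1) = 0) :
    y a * y b = y c + 1 := by
  have h2 : y a * y b - y c - 1 = 0 := by
    simp only [map_sub, map_mul, map_one] at h; exact h
  linear_combination h2

open LaurentPolynomial in
lemma laurent_gen (a b c : Fin 5) (h : y a * y b = y c + 1) :
    LaurentPolynomial.C (y a) * T 1 * (LaurentPolynomial.C (y b) * T 1) - LaurentPolynomial.C (y c) * T 1 * T 1 - (T 1 : LaurentPolynomial ClusterA) ^ 2
      = 0 := by
  have hC : (LaurentPolynomial.C (y a) : LaurentPolynomial ClusterA) * LaurentPolynomial.C (y b) = LaurentPolynomial.C (y c) + 1 := by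
    rw [← map_mul, h, map_add, map_one]
  linear_combination (T 1 * T 1 : LaurentPolynomial ClusterA) * hC

lemma hker6 : ∀ p ∈ fanoRelations, aeval v p = 0 := by
  have g1 := laurent_gen 0 2 1 (ymul 0 2 1 (yrel _ (by left; rfl)))
  have g2 := laurent_gen 1 3 2 (ymul 1 3 2 (yrel _ (by right; left; rfl)))
  have g3 := laurent_gen 2 4 3 (ymul 2 4 3 (yrel _ (by right; right; left; rfl)))
  have g4 := laurent_gen 3 0 4 (ymul 3 0 4 (yrel _ (by right; right; right; left; rfl)))
  have g5 := laurent_gen 4 1 0 (ymul 4 1 0 (yrel _ (by right; right; right; right; rfl)))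
  intro p hp
  have : fanoRelations ≤
      RingHom.ker (aeval v : MvPolynomial (Fin 6) ℂ →ₐ[ℂ] LaurentPolynomial ClusterA) := by
    rw [fanoRelations, Ideal.span_le]
    rintro q (rfl | rfl | rfl | rfl | rfl) <;>
      simp only [SetLike.mem_coe, RingHom.mem_ker, AlgHom.coe_toRingHom, map_sub, map_mul,
        map_pow, aeval_X, v0, v1, v2, v3, v4, v5]
    · linear_combination g1
    · linear_combination g2
    · linear_combination g3
    · linear_combination g4
    · linear_combination g5
  exact this hp

def φ0 : FanoS →ₐ[ℂ] LaurentPolynomial ClusterA :=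
  Ideal.Quotient.liftₐ fanoRelations (aeval v) hker6

lemma φ0_mk (p : MvPolynomial (Fin 6) ℂ) :
    φ0 (Ideal.Quotient.mk fanoRelations p) = aeval v p := rfl

open LaurentPolynomial in
lemma φ0_θ0 : φ0 (θ 0) = T 1 := by
  rw [θ, φ0_mk, aeval_X]; rfl

open LaurentPolynomial in
def Φ : FanoT →+* LaurentPolynomial ClusterA :=
  IsLocalization.Away.lift (S := FanoT) (θ 0) (g := φ0.toRingHom)
    (by show IsUnit (φ0 (θ 0)); rw [φ0_θ0]; exact isUnit_T 1)

lemma Φ_alg (a : FanoS) : Φ (algebraMap FanoS FanoT a) = φ0 a :=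
  IsLocalization.Away.lift_eq _ _ _

open LaurentPolynomial in
lemma Φ_inv : Φ (IsLocalization.Away.invSelf (S := FanoT) (θ 0)) = T (-1) := by
  have h1 : (T 1 : LaurentPolynomial ClusterA) *
      Φ (IsLocalization.Away.invSelf (S := FanoT) (θ 0)) = 1 := by
    rw [← φ0_θ0, ← Φ_alg, ← map_mul, IsLocalization.Away.mul_invSelf, map_one]
  have h2 : (T 1 : LaurentPolynomial ClusterA) * T (-1) = 1 := by
    rw [← T_add]; norm_num
  exact (isUnit_T 1).mul_left_cancel (h1.trans h2.symm)

open LaurentPolynomial in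
lemma Φ_fanoX (i : Fin 5) : Φ (fanoX i) = LaurentPolynomial.C (y i) := by
  have hv : v i.succ = LaurentPolynomial.C (y i) * T 1 := by fin_cases i <;> rfl
  rw [fanoX, map_mul, Φ_alg, Φ_inv, θ, φ0_mk, aeval_X, hv, mul_assoc, ← T_add]
  norm_num [T_zero]

open LaurentPolynomial in
lemma Φ_aeval (p : MvPolynomial (Fin 5) ℂ) :
    Φ (aeval fanoX p) = LaurentPolynomial.C (Ideal.Quotient.mk clusterRelations p) := by
  have : Φ.comp ((aeval fanoX : MvPolynomial (Fin 5) ℂ →ₐ[ℂ] FanoT) : _ →+* FanoT)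
      = (C : ClusterA →+* LaurentPolynomial ClusterA).comp
          (Ideal.Quotient.mk clusterRelations) := by
    apply MvPolynomial.ringHom_ext
    · intro r
      show Φ (aeval fanoX (MvPolynomial.C r)) = _
      rw [aeval_C]
      show Φ (algebraMap FanoS FanoT (algebraMap ℂ FanoS r)) = _
      rw [Φ_alg]
      have h1 : (algebraMap ℂ FanoS) r = Ideal.Quotient.mk fanoRelations (MvPolynomial.C r) :=
        rfl
      have h2 : (Ideal.Quotient.mk clusterRelations) (MvPolynomial.C r)
          = algebraMap ℂ ClusterA r := rfl
      rw [h1, φ0_mk, aeval_C]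
      rfl
    · intro i
      show Φ (aeval fanoX (X i)) = _
      rw [aeval_X, Φ_fanoX]
      rfl
  exact congrFun (congrArg (fun f => f.toFun) this) p

open LaurentPolynomial in
lemma C_inj : Function.Injective (C : ClusterA → LaurentPolynomial ClusterA) := by
  intro a b h
  simpa using congrArg (fun f => f.coeff 0) h

end DehomAux

/-- The subring of the degree-`0` part of `S[θ₀^{-1}]` generated by the
`x_i = θ_i/θ₀` is presented by the relations `x₁x₃ = x₂+1`, …, `x₅x₂ = x₁+1`:
the generator-matching `ℂ`-algebra morphism from the presented algebra is injective
with range the subalgebra generated by the `x_i`. -/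
theorem dehomogenization_presentation :
    ∃ e : ClusterA →ₐ[ℂ] FanoT,
      Function.Injective e ∧
      (∀ i : Fin 5, e (Ideal.Quotient.mk clusterRelations (X i)) = fanoX i) ∧
      e.range = Algebra.adjoin ℂ (Set.range fanoX) := by
  refine ⟨DehomAux.e, ?_, ?_, ?_⟩
  · rw [injective_iff_map_eq_zero]
    intro a ha
    obtain ⟨p, rfl⟩ := Ideal.Quotient.mk_surjective a
    rw [DehomAux.e_mk] at ha
    have h := DehomAux.Φ_aeval p
    rw [ha, map_zero] at h
    apply DehomAux.C_inj
    rw [map_zero]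
    exact h.symm
  · intro i
    rw [DehomAux.e_mk, aeval_X]
  · apply le_antisymm
    · rintro x ⟨a, rfl⟩
      obtain ⟨p, rfl⟩ := Ideal.Quotient.mk_surjective a
      show DehomAux.e (Ideal.Quotient.mk clusterRelations p) ∈ _
      rw [DehomAux.e_mk]
      exact Algebra.adjoin_range_eq_range_aeval ℂ fanoX ▸ ⟨p, rfl⟩
    · rw [Algebra.adjoin_range_eq_range_aeval]
      rintro x ⟨p, rfl⟩
      exact ⟨Ideal.Quotient.mk clusterRelations p, DehomAux.e_mk p⟩


end
end

section
/- For the seed with one mutable vertex 1 and one highly frozen vertex 2 joined by an arrow 1 → 2, and cluster (x₁, x₂): the complement of the image of the gluing of T(0) = (𝔸¹\{0}) × 𝔸¹ and T(1) = (𝔸¹\{0}) × 𝔸¹ (glued along {x₂ ≠ −1} by (x₁,x₂) ↦ ((1+x₂)/x₁, x₂)) embeds as an open subscheme of 𝔸² via (x₁,x₂) ↦ (x₁, (1+x₂)/x₁) on T(0) and (y₁,y₂) ↦ ((1+y₂)/y₁, y₁) on T(1), whose image is exactly 𝔸² \ {(0,0)}. -/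
/-- Points of the two charts `T(0)` and `T(1)`, each a copy of `(𝔸¹∖{0}) × 𝔸¹`. -/
def ClPoint : Type :=
  {p : ℂ × ℂ // p.1 ≠ 0} ⊕ {p : ℂ × ℂ // p.1 ≠ 0}

noncomputable instance : TopologicalSpace ClPoint := by unfold ClPoint; infer_instance

/-- The gluing relation of the type `A₁` seed with one frozen coefficient:
`(x₁,x₂) ∈ T(0)` with `x₂ ≠ −1` is identified with
`((1+x₂)/x₁, x₂) ∈ T(1)`. -/
def clRel : ClPoint → ClPoint → Prop
  | Sum.inl x, Sum.inr y => x.1.2 ≠ -1 ∧ y.1.1 = (1 + x.1.2) / x.1.1 ∧ y.1.2 = x.1.2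
  | _, _ => False

/-- The two chart maps to `𝔸²`: `(x₁,x₂) ↦ (x₁, (1+x₂)/x₁)` on `T(0)` and
`(y₁,y₂) ↦ ((1+y₂)/y₁, y₁)` on `T(1)`. -/
noncomputable def chartMap : ClPoint → ℂ × ℂ
  | Sum.inl x => (x.1.1, (1 + x.1.2) / x.1.1)
  | Sum.inr y => ((1 + y.1.2) / y.1.1, y.1.1)

/- Everything rests on the invariant `x₂ = p q - 1` of a point with image `(p, q)`. Together with
the chart's nonvanishing coordinate it recovers the point; and a `T(0)`-point and a `T(1)`-point
with the same image `(p, q)` have `p ≠ 0` and `q ≠ 0`, so their common `x₂ = p q - 1` is not `-1`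
and they are glued. -/

lemma chartMap_eq_of_clRel : ∀ a b : ClPoint, clRel a b → chartMap a = chartMap b := by
  rintro (x | x) (y | y) h <;> simp only [clRel] at h
  obtain ⟨hx₂, hy₁, hy₂⟩ := h
  have hx₂' : 1 + x.1.2 ≠ 0 := fun h => hx₂ (eq_neg_of_add_eq_zero_right h)
  simp only [chartMap, hy₁, hy₂, div_div_cancel₀ hx₂']

lemma chartMap_inl_injective : Function.Injective fun x => chartMap (Sum.inl x) := by
  rintro ⟨⟨x₁, x₂⟩, hx⟩ ⟨⟨y₁, y₂⟩, _⟩ h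
  simp only [chartMap, Prod.mk.injEq] at h
  obtain ⟨rfl, h⟩ := h
  rw [div_left_inj' hx, add_right_inj] at h
  rw [h]

lemma chartMap_inr_injective : Function.Injective fun y => chartMap (Sum.inr y) := by
  rintro ⟨⟨x₁, x₂⟩, hx⟩ ⟨⟨y₁, y₂⟩, _⟩ h
  simp only [chartMap, Prod.mk.injEq] at h
  obtain ⟨h, rfl⟩ := h
  rw [div_left_inj' hx, add_right_inj] at h
  rw [h]

lemma clRel_of_chartMap_eq {x y : {p : ℂ × ℂ // p.1 ≠ 0}}
    (h : chartMap (Sum.inl x) = chartMap (Sum.inr y)) : clRel (Sum.inl x) (Sum.inr y) := by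
  obtain ⟨⟨x₁, x₂⟩, hx⟩ := x
  obtain ⟨⟨y₁, y₂⟩, hy⟩ := y
  simp only [chartMap, Prod.mk.injEq] at h
  obtain ⟨hx₁, hy₁⟩ := h
  have hx₂ : x₁ * y₁ = 1 + x₂ := by rw [← hy₁, mul_div_cancel₀ _ hx]
  have hy₂ : x₁ * y₁ = 1 + y₂ := by rw [hx₁, div_mul_cancel₀ _ hy]
  refine ⟨fun hx₂' => hy ?_, hy₁.symm, ?_⟩
  · rw [← hy₁, show x₂ = -1 from hx₂', add_neg_cancel, zero_div]
  · simpa only [add_right_inj] using hy₂.symm.trans hx₂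

lemma injective_quotLift_chartMap :
    Function.Injective (Quot.lift chartMap chartMap_eq_of_clRel) := by
  rintro ⟨x | x⟩ ⟨y | y⟩ h <;> change chartMap _ = chartMap _ at h
  · rw [chartMap_inl_injective h]
  · exact Quot.sound (clRel_of_chartMap_eq h)
  · exact (Quot.sound (clRel_of_chartMap_eq h.symm)).symm
  · rw [chartMap_inr_injective h]

lemma continuous_chartMap : Continuous chartMap := by
  refine continuous_sum_dom.mpr ⟨?_, ?_⟩
  · exact continuous_subtype_val.fst.prodMk
      ((continuous_const.add continuous_subtype_val.snd).div continuous_subtype_val.fst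
        fun x => x.2)
  · exact ((continuous_const.add continuous_subtype_val.snd).div continuous_subtype_val.fst
        fun x => x.2).prodMk continuous_subtype_val.fst

lemma range_chartMap : Set.range chartMap = {p : ℂ × ℂ | p ≠ (0, 0)} := by
  ext ⟨p, q⟩
  simp only [Set.mem_range, Set.mem_ofPred_eq, ne_eq, Prod.mk.injEq, not_and_or]
  constructor
  · rintro ⟨⟨x, hx⟩ | ⟨y, hy⟩, h⟩ <;> simp only [chartMap, Prod.mk.injEq] at h
    · exact .inl (h.1 ▸ hx)
    · exact .inr (h.2 ▸ hy)
  · rintro (hp | hq)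
    · refine ⟨Sum.inl ⟨(p, p * q - 1), hp⟩, ?_⟩
      simp only [chartMap, add_sub_cancel, mul_div_cancel_left₀ _ hp]
    · refine ⟨Sum.inr ⟨(q, p * q - 1), hq⟩, ?_⟩
      simp only [chartMap, add_sub_cancel, mul_div_cancel_right₀ _ hq]

/-- The finite cluster variety `Y` glued from `T(0)` and `T(1)` embeds into `𝔸²`
via the two chart maps, which are compatible with the gluing, and the image is
exactly `𝔸² ∖ {(0,0)}`. -/
noncomputable instance : TopologicalSpace (Quot clRel) := instTopologicalSpaceQuot

theorem finite_cluster_variety_embeds_in_A2_minus_origin :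
    (∀ a b : ClPoint, clRel a b → chartMap a = chartMap b) ∧
    ∃ G : Quot clRel → ℂ × ℂ,
      (∀ a : ClPoint, G (Quot.mk clRel a) = chartMap a) ∧
      Function.Injective G ∧
      Continuous G ∧
      Set.range G = {p : ℂ × ℂ | p ≠ (0, 0)} := by
  refine ⟨chartMap_eq_of_clRel, Quot.lift chartMap chartMap_eq_of_clRel, fun _ => rfl,
    injective_quotLift_chartMap, continuous_quot_lift _ continuous_chartMap, ?_⟩
  rw [Set.range_quot_lift, range_chartMap]
end
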